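/- Let G be a finite connected simple graph and let x ≠ y be vertices of G. Then κ(x,y) = (1/d(x,y)) · sup_B Σ_{u,v ∈ V(G)} B(u,v) d(u,v), where the supremum is taken over all *-couplings B between m_x^0 and m_y^0 and κ(x,y) is the Lin–Lu–Yau curvature. -/

import Mathlib

open scoped BigOperators

namespace LLY

variable {V : Type*}

/-- Degree of a vertex (as `Nat.card` of its neighbor set; agrees with the usual
degree in a locally finite graph). -/
noncomputable def deg (G : SimpleGraph V) (u : V) : ℕ := Nat.card (G.neighborSet u)

/-- `G` is locally finite. -/
def LocFin (G : SimpleGraph V) : Prop := ∀ v : V, (G.neighborSet v).Finite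

/-- `f` is 1-Lipschitz with respect to the graph distance of `G`. -/
def Lip1 (G : SimpleGraph V) (f : V → ℝ) : Prop :=
  ∀ a b : V, |f a - f b| ≤ (G.dist a b : ℝ)

/-- The (normalized) graph Laplacian `Δf(u) = (1/d(u)) ∑_{v ∈ N(u)} (f v - f u)`. -/
noncomputable def lap (G : SimpleGraph V) (f : V → ℝ) (u : V) : ℝ :=
  (1 / (deg G u : ℝ)) * ∑ᶠ v ∈ G.neighborSet u, (f v - f u)

/-- The gradient `∇_{xy} f = (f x - f y)/d(x,y)`. -/
noncomputable def grad (G : SimpleGraph V) (f : V → ℝ) (x y : V) : ℝ :=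
  (f x - f y) / (G.dist x y : ℝ)

/-- Lin–Lu–Yau curvature of the pair `{x,y}` (limit-free Münch–Wojciechowski form):
`κ(x,y) = inf { ∇_{xy} Δf : f 1-Lipschitz, ∇_{yx} f = 1 }`. -/
noncomputable def kappa (G : SimpleGraph V) (x y : V) : ℝ :=
  sInf {k : ℝ | ∃ f : V → ℝ, Lip1 G f ∧ grad G f y x = 1 ∧ k = grad G (lap G f) x y}

end LLY

namespace LLY

variable {V : Type*}

open Classical in
/-- The idleness-0 random walk distribution at `x`: `m_x^0(u) = 1/d(x)` on `N(x)`. -/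
noncomputable def m0 (G : SimpleGraph V) (x u : V) : ℝ :=
  if u ∈ G.neighborSet x then 1 / (deg G x : ℝ) else 0

/-- `B` is a `*`-coupling between `m_x^0` and `m_y^0`. -/
def IsStarCoupling (G : SimpleGraph V) (x y : V) (B : V × V → ℝ) : Prop :=
  (Function.support B).Finite ∧
  0 < B (x, y) ∧
  (∀ p : V × V, p ≠ (x, y) → B p ≤ 0) ∧
  (∑ᶠ p : V × V, B p) = 0 ∧
  (∀ u : V, u ≠ x → ∑ᶠ v : V, B (u, v) = - m0 G x u) ∧
  (∀ v : V, v ≠ y → ∑ᶠ u : V, B (u, v) = - m0 G y v)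

end LLY

/-!
Both sides are the optimal values of a finite linear program and of its dual. Every `*`-coupling
has the form `B = (∑ z) δ_(x,y) - z` for a plan `z ≥ 0` on `V × V` with row sums `m_x^0` off `x`
and column sums `m_y^0` off `y`, and then `∑ B d = ∑ z (d(x,y) - d)`. The marginal conditions give
`∑ B(u,v) (f v - f u) = Δf(x) - Δf(y)`, so for 1-Lipschitz `f` with `f y - f x = d(x,y)` this
bounds `∑ B d` (weak duality). Conversely, a feasible dual point is a pair of potentials, and
replacing the first one by its 1-Lipschitz envelope `v ↦ min_u (g u + d(u,v))` produces such an
`f` with no larger objective; strong LP duality, from Farkas' lemma and the closedness of finitely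
generated cones (conic Carathéodory), closes the gap.
-/

open Finset

section Caratheodory

variable {𝕜 E J : Type*} [Field 𝕜] [LinearOrder 𝕜] [IsStrictOrderedRing 𝕜]
  [AddCommGroup E] [Module 𝕜 E] [DecidableEq J]

theorem exists_nonneg_sum_erase_eq_of_not_linearIndepOn {a : J → E} {s : Finset J} {z : J → 𝕜}
    (hz : ∀ j ∈ s, 0 ≤ z j) (hs : ¬LinearIndepOn 𝕜 a s) :
    ∃ i ∈ s, ∃ w : J → 𝕜, (∀ j ∈ s, 0 ≤ w j) ∧
      ∑ j ∈ s.erase i, w j • a j = ∑ j ∈ s, z j • a j := by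
  obtain ⟨g, hg, i₀, hi₀, hgi₀⟩ : ∃ g : J → 𝕜, ∑ j ∈ s, g j • a j = 0 ∧ ∃ i ∈ s, 0 < g i := by
    obtain ⟨f, hf, i₀, hi₀, hfi₀⟩ := not_linearIndepOn_finset_iff.mp hs
    rcases hfi₀.lt_or_gt with hneg | hpos
    · exact ⟨-f, by simp [neg_smul, hf], i₀, hi₀, neg_pos.mpr hneg⟩
    · exact ⟨f, hf, i₀, hi₀, hpos⟩
  -- Move from `z` along the dependency `g` until the first coordinate hits zero.
  obtain ⟨i, hiP, hmin⟩ := (s.filter (0 < g ·)).exists_min_image (fun j => z j / g j)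
    ⟨i₀, mem_filter.mpr ⟨hi₀, hgi₀⟩⟩
  obtain ⟨his, hgi⟩ := mem_filter.mp hiP
  set t := z i / g i
  have ht : 0 ≤ t := div_nonneg (hz i his) hgi.le
  refine ⟨i, his, fun j => z j - t * g j, fun j hj => ?_, ?_⟩
  · rcases lt_or_ge 0 (g j) with hgj | hgj
    · have := (le_div_iff₀ hgj).mp (hmin j (mem_filter.mpr ⟨hj, hgj⟩))
      linarith
    · linarith [hz j hj, mul_nonpos_of_nonneg_of_nonpos ht hgj]
  · rw [sum_erase _ (by simp [t, div_mul_cancel₀ _ hgi.ne'])]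
    simp only [sub_smul, sum_sub_distrib, mul_smul, ← smul_sum, hg, smul_zero, sub_zero]

theorem exists_linearIndepOn_nonneg_sum_eq (a : J → E) (s : Finset J) (z : J → 𝕜)
    (hz : ∀ j ∈ s, 0 ≤ z j) :
    ∃ t : Finset J, LinearIndepOn 𝕜 a t ∧ ∃ w : J → 𝕜, (∀ j ∈ t, 0 ≤ w j) ∧
      ∑ j ∈ t, w j • a j = ∑ j ∈ s, z j • a j := by
  induction s using Finset.strongInduction generalizing z with
  | H s ih =>
    by_cases hs : LinearIndepOn 𝕜 a s
    · exact ⟨s, hs, z, hz, rfl⟩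
    obtain ⟨i, his, w, hw, hsum⟩ := exists_nonneg_sum_erase_eq_of_not_linearIndepOn hz hs
    obtain ⟨t, ht, w', hw', hsum'⟩ :=
      ih _ (erase_ssubset his) w fun j hj => hw j (mem_of_mem_erase hj)
    exact ⟨t, ht, w', hw', hsum'.trans hsum⟩

end Caratheodory

section Farkas

variable {E J : Type*} [NormedAddCommGroup E] [NormedSpace ℝ E] [Fintype J]

theorem isClosed_image_linearCombination_nonneg (a : J → E) :
    IsClosed (Fintype.linearCombination ℝ a '' Set.Ici 0) := by
  classical
  have hunion : Fintype.linearCombination ℝ a '' Set.Ici 0 =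
      ⋃ t ∈ {t : Finset J | LinearIndepOn ℝ a t},
        Fintype.linearCombination ℝ (fun j : t => a j) '' Set.Ici 0 := by
    ext x
    simp only [Set.mem_image, Set.mem_Ici, Set.mem_iUnion, Set.mem_ofPred_eq,
      Fintype.linearCombination_apply, exists_prop]
    constructor
    · rintro ⟨z, hz, rfl⟩
      obtain ⟨t, ht, w, hw, hsum⟩ :=
        exists_linearIndepOn_nonneg_sum_eq a univ z fun j _ => hz j
      exact ⟨t, ht, fun j => w j, fun j => hw j j.2,
        by rw [sum_coe_sort t (fun j => w j • a j), hsum]⟩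
    · rintro ⟨t, -, w, hw, rfl⟩
      refine ⟨fun j => if h : j ∈ t then w ⟨j, h⟩ else 0, fun j => ?_, ?_⟩
      · by_cases h : j ∈ t
        · simpa [h] using hw ⟨j, h⟩
        · simp [h]
      · rw [← sum_subset (subset_univ t) fun j _ hj => by simp [hj], ← sum_coe_sort t]
        exact sum_congr rfl fun j _ => by simp
  rw [hunion]
  refine Set.Finite.isClosed_biUnion (Set.toFinite _) fun t ht => ?_
  exact (LinearMap.isClosedEmbedding_of_injective (LinearMap.ker_eq_bot.mpr
    ht.fintypeLinearCombination_injective)).isClosedMap _ isClosed_Ici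

theorem exists_strongDual_of_forall_sum_smul_ne (a : J → E) (b : E)
    (h : ∀ z : J → ℝ, 0 ≤ z → ∑ j, z j • a j ≠ b) :
    ∃ φ : StrongDual ℝ E, (∀ j, φ (a j) ≤ 0) ∧ 0 < φ b := by
  classical
  let C : ProperCone ℝ E :=
    ⟨(PointedCone.positive ℝ (J → ℝ)).map (Fintype.linearCombination ℝ a),
      isClosed_image_linearCombination_nonneg a⟩
  have hb : b ∉ C := by
    rintro ⟨z, hz, hzb⟩
    exact h z hz (by simpa [Fintype.linearCombination_apply] using hzb)
  obtain ⟨φ, hC, hφb⟩ := C.hyperplane_separation_point hb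
  refine ⟨-φ, fun j => ?_, by simpa using hφb⟩
  have : a j ∈ C := ⟨Pi.single j 1, by simp, by simp⟩
  simpa using hC _ this

end Farkas

theorem StrongDual.exists_apply_prod_eq {R : Type*} [Fintype R] [DecidableEq R]
    (φ : StrongDual ℝ ((R → ℝ) × ℝ)) :
    ∃ (u : R → ℝ) (l : ℝ), ∀ v t, φ (v, t) = ∑ r, v r * u r + t * l := by
  refine ⟨fun r => φ (fun j => if r = j then 1 else 0, 0), φ (0, 1), fun v t => ?_⟩
  have hsplit : φ (v, t) = φ (v, 0) + φ (0, t) := by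
    rw [← map_add, Prod.mk_add_mk, add_zero, zero_add]
  have hv := LinearMap.pi_apply_eq_sum_univ ((φ : (R → ℝ) × ℝ →ₗ[ℝ] ℝ) ∘ₗ LinearMap.inl ℝ _ _) v
  have ht : φ (0, t) = t * φ (0, 1) := by simpa using φ.map_smul t ((0 : R → ℝ), (1 : ℝ))
  simp only [LinearMap.coe_comp, Function.comp_apply, LinearMap.inl_apply, smul_eq_mul,
    ContinuousLinearMap.coe_coe] at hv
  rw [hsplit, ht, hv]

theorem exists_nonneg_le_sum_mul_of_forall_le_dual {ι R : Type*} [Fintype ι] [Fintype R]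
    (A : ι → R → ℝ) (b : R → ℝ) (c : ι → ℝ) (β : ℝ)
    (hfeas : ∃ w : R → ℝ, ∀ j, c j ≤ ∑ r, A j r * w r)
    (hbound : ∀ w : R → ℝ, (∀ j, c j ≤ ∑ r, A j r * w r) → β ≤ ∑ r, b r * w r) :
    ∃ z : ι → ℝ, 0 ≤ z ∧ (∀ r, ∑ j, z j * A j r = b r) ∧ β ≤ ∑ j, z j * c j := by
  classical
  by_contra hno
  -- Farkas for the generators `(A j, c j)` and `(0, -1)` against the target `(b, β)`.
  let a : Option ι → (R → ℝ) × ℝ := fun o => o.elim (0, -1) fun j => (A j, c j)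
  obtain ⟨φ, hφa, hφb⟩ := exists_strongDual_of_forall_sum_smul_ne a (b, β) <| by
    intro z hz hzb
    refine hno ⟨fun j => z (some j), fun j => hz _, fun r => ?_, ?_⟩
    · have := congrArg (fun p => p.1 r) hzb
      simpa [a, Fintype.sum_option, Prod.fst_sum, Finset.sum_apply, mul_comm] using this
    · have : -z none + ∑ j, z (some j) * c j = β := by
        simpa [a, Fintype.sum_option, Prod.snd_sum] using congrArg Prod.snd hzb
      show β ≤ ∑ j, z (some j) * c j
      linarith [show (0 : ℝ) ≤ z none from hz none]
  obtain ⟨u, l, hφ⟩ := φ.exists_apply_prod_eq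
  have hl : 0 ≤ l := by simpa [a, hφ] using hφa none
  have hAu : ∀ j, ∑ r, A j r * u r + c j * l ≤ 0 := fun j => by simpa [a, hφ] using hφa (some j)
  have hbu : 0 < ∑ r, b r * u r + β * l := by simpa [hφ] using hφb
  obtain ⟨w₀, hw₀⟩ := hfeas
  have hshift : ∀ (M w : R → ℝ) (s : ℝ),
      ∑ r, M r * (w r - s * u r) = ∑ r, M r * w r - s * ∑ r, M r * u r := fun M w s => by
    simp only [mul_sub, sum_sub_distrib, mul_sum, mul_left_comm s]
  rcases hl.eq_or_lt with rfl | hlpos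
  · -- `u` is an improving ray of the dual: moving along it lowers the dual objective without end.
    simp only [mul_zero, add_zero] at hAu hbu
    set s := (∑ r, b r * w₀ r - β + 1) / ∑ r, b r * u r
    have hs : 0 ≤ s := div_nonneg (by linarith [hbound w₀ hw₀]) hbu.le
    have := hbound (fun r => w₀ r - s * u r) fun j => by
      rw [hshift]
      linarith [hw₀ j, mul_nonpos_of_nonneg_of_nonpos hs (hAu j)]
    rw [hshift, div_mul_cancel₀ _ hbu.ne'] at this
    linarith
  · -- `-u / l` is dual feasible, with dual objective below `β`.
    have hscale : ∀ M : R → ℝ, ∑ r, M r * (0 - l⁻¹ * u r) = -(∑ r, M r * u r) / l := fun M => by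
      rw [hshift]
      simp [div_eq_inv_mul]
    have := hbound (fun r => 0 - l⁻¹ * u r) fun j => by
      rw [hscale, le_div_iff₀ hlpos]
      linarith [hAu j]
    rw [hscale, le_div_iff₀ hlpos] at this
    linarith

namespace LLY

variable {V : Type*} {G : SimpleGraph V}

theorem m0_nonneg (x u : V) : 0 ≤ m0 G x u := by
  unfold m0; split_ifs <;> positivity

@[simp]
theorem m0_self (x : V) : m0 G x x = 0 := by
  simp [m0]

theorem dist_triangle_real (hconn : G.Connected) (u v w : V) :
    (G.dist u w : ℝ) ≤ G.dist u v + G.dist v w := by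
  exact_mod_cast hconn.dist_triangle

theorem lip1_dist (hconn : G.Connected) (x : V) : Lip1 G fun v => (G.dist x v : ℝ) := by
  intro a b
  have h₁ := dist_triangle_real hconn x a b
  have h₂ := dist_triangle_real hconn x b a
  rw [SimpleGraph.dist_comm (u := b)] at h₂
  rw [abs_sub_le_iff]
  constructor <;> linarith

def lapDiffs (G : SimpleGraph V) (x y : V) : Set ℝ :=
  {t | ∃ f, Lip1 G f ∧ f y - f x = G.dist x y ∧ t = lap G f x - lap G f y}

open Pointwise in
theorem kappa_eq_inv_dist_mul_sInf_lapDiffs (hconn : G.Connected) {x y : V} (hne : x ≠ y) :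
    kappa G x y = (G.dist x y : ℝ)⁻¹ * sInf (lapDiffs G x y) := by
  have hD : (0 : ℝ) < G.dist x y := by exact_mod_cast hconn.pos_dist_of_ne hne
  have hset : {k : ℝ | ∃ f, Lip1 G f ∧ grad G f y x = 1 ∧ k = grad G (lap G f) x y} =
      (G.dist x y : ℝ)⁻¹ • lapDiffs G x y := by
    ext k
    simp only [Set.mem_ofPred_eq, Set.mem_smul_set, lapDiffs, grad, SimpleGraph.dist_comm (u := y),
      div_eq_one_iff_eq hD.ne', smul_eq_mul]
    constructor
    · rintro ⟨f, hf, hfxy, rfl⟩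
      exact ⟨_, ⟨f, hf, hfxy, rfl⟩, by rw [div_eq_inv_mul]⟩
    · rintro ⟨_, ⟨f, hf, hfxy, rfl⟩, rfl⟩
      exact ⟨f, hf, hfxy, by rw [div_eq_inv_mul]⟩
  rw [kappa, hset, Real.sInf_smul_of_nonneg (inv_nonneg.mpr hD.le), smul_eq_mul]

variable [Fintype V]

theorem deg_eq_degree [DecidableRel G.Adj] (u : V) : deg G u = G.degree u := by
  rw [deg, Nat.card_eq_fintype_card, SimpleGraph.card_neighborSet_eq_degree]

theorem deg_pos [Nontrivial V] (hconn : G.Connected) (u : V) : 0 < deg G u := by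
  classical
  rw [deg_eq_degree]
  exact hconn.preconnected.degree_pos_of_nontrivial u

theorem sum_m0_mul [DecidableRel G.Adj] (x : V) (g : V → ℝ) :
    ∑ u, m0 G x u * g u = (deg G x : ℝ)⁻¹ * ∑ u ∈ G.neighborFinset x, g u := by
  simp [m0, ite_mul, mul_sum, ← sum_filter, SimpleGraph.neighborFinset_eq_filter]

theorem sum_m0 {x : V} (hx : deg G x ≠ 0) : ∑ u, m0 G x u = 1 := by
  classical
  rw [deg_eq_degree] at hx
  simpa [deg_eq_degree, hx] using sum_m0_mul (G := G) x 1

theorem lap_eq_inv_deg_mul_sum [DecidableRel G.Adj] (f : V → ℝ) (u : V) :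
    lap G f u = (deg G u : ℝ)⁻¹ * ∑ v ∈ G.neighborFinset u, (f v - f u) := by
  rw [lap, one_div, finsum_mem_eq_toFinset_sum]
  rfl

theorem lap_eq_sum_m0_mul_sub {u : V} (hu : deg G u ≠ 0) (f : V → ℝ) :
    lap G f u = ∑ v, m0 G u v * f v - f u := by
  classical
  rw [lap_eq_inv_deg_mul_sum, sum_m0_mul, sum_sub_distrib, sum_const,
    SimpleGraph.card_neighborFinset_eq_degree, ← deg_eq_degree, nsmul_eq_mul, mul_sub, ← mul_assoc,
    inv_mul_cancel₀ (by exact_mod_cast hu), one_mul]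

theorem abs_lap_le_one {f : V → ℝ} (hf : Lip1 G f) (u : V) : |lap G f u| ≤ 1 := by
  classical
  rw [lap_eq_inv_deg_mul_sum, abs_mul, abs_inv, Nat.abs_cast]
  refine inv_mul_le_one_of_le₀ ((abs_sum_le_sum_abs _ _).trans ?_) (Nat.cast_nonneg _)
  calc ∑ v ∈ G.neighborFinset u, |f v - f u|
      ≤ ∑ v ∈ G.neighborFinset u, (1 : ℝ) := sum_le_sum fun v hv => by
        have hadj : G.Adj v u := ((G.mem_neighborFinset u v).mp hv).symm
        simpa [SimpleGraph.dist_eq_one_iff_adj.mpr hadj] using hf v u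
    _ = deg G u := by simp [deg_eq_degree]

theorem isStarCoupling_iff {x y : V} {B : V × V → ℝ} :
    IsStarCoupling G x y B ↔ 0 < B (x, y) ∧ (∀ p, p ≠ (x, y) → B p ≤ 0) ∧ ∑ p, B p = 0 ∧
      (∀ u, u ≠ x → ∑ v, B (u, v) = -m0 G x u) ∧ (∀ v, v ≠ y → ∑ u, B (u, v) = -m0 G y v) := by
  simp only [IsStarCoupling, finsum_eq_sum_of_fintype, Set.toFinite, true_and]

theorem eq_ite_sub_of_forall_ne [DecidableEq V] {R m : V → ℝ} {x : V}
    (hR : ∀ u, u ≠ x → R u = -m u) (hsum : ∑ u, R u = 0) (hm : ∑ u, m u = 1) (hmx : m x = 0)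
    (u : V) :
    R u = (if u = x then 1 else 0) - m u := by
  split_ifs with hu
  · subst hu
    rw [← add_sum_erase _ _ (mem_univ u), sum_congr rfl fun v hv => hR v (ne_of_mem_erase hv),
      sum_neg_distrib, sum_erase _ hmx, hm] at hsum
    linarith
  · rw [hR u hu, zero_sub]

theorem sum_ite_sub_mul [DecidableEq V] (x : V) (m f : V → ℝ) :
    ∑ u, ((if u = x then 1 else 0) - m u) * f u = f x - ∑ u, m u * f u := by
  simp [sub_mul, sum_sub_distrib]

theorem IsStarCoupling.sum_mul_sub_eq_lap_sub [Nontrivial V] (hconn : G.Connected) {x y : V}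
    {B : V × V → ℝ} (hB : IsStarCoupling G x y B) (f : V → ℝ) :
    ∑ p, B p * (f p.2 - f p.1) = lap G f x - lap G f y := by
  classical
  obtain ⟨-, -, htot, hrow, hcol⟩ := isStarCoupling_iff.mp hB
  have hx := (deg_pos hconn x).ne'
  have hy := (deg_pos hconn y).ne'
  have hrow' := eq_ite_sub_of_forall_ne hrow (by rwa [← Fintype.sum_prod_type']) (sum_m0 hx)
    (m0_self x)
  have hcol' := eq_ite_sub_of_forall_ne hcol (by rwa [← Fintype.sum_prod_type_right']) (sum_m0 hy)
    (m0_self y)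
  have h₁ : ∑ p, B p * f p.1 = f x - ∑ u, m0 G x u * f u := by
    simp only [Fintype.sum_prod_type, ← sum_mul, hrow', sum_ite_sub_mul]
  have h₂ : ∑ p, B p * f p.2 = f y - ∑ v, m0 G y v * f v := by
    simp only [Fintype.sum_prod_type_right, ← sum_mul, hcol', sum_ite_sub_mul]
  rw [lap_eq_sum_m0_mul_sub hx, lap_eq_sum_m0_mul_sub hy]
  simp only [mul_sub, sum_sub_distrib, h₁, h₂]
  ring

theorem IsStarCoupling.sum_mul_dist_le [Nontrivial V] (hconn : G.Connected) {x y : V}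
    {B : V × V → ℝ} (hB : IsStarCoupling G x y B) {f : V → ℝ} (hf : Lip1 G f)
    (hfxy : f y - f x = G.dist x y) :
    ∑ p, B p * (G.dist p.1 p.2 : ℝ) ≤ lap G f x - lap G f y := by
  rw [← hB.sum_mul_sub_eq_lap_sub hconn]
  refine sum_le_sum fun p _ => ?_
  by_cases hp : p = (x, y)
  · rw [hp, hfxy]
  · refine mul_le_mul_of_nonpos_left ?_ ((isStarCoupling_iff.mp hB).2.1 p hp)
    calc f p.2 - f p.1 ≤ |f p.2 - f p.1| := le_abs_self _
      _ ≤ G.dist p.2 p.1 := hf _ _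
      _ = G.dist p.1 p.2 := by rw [SimpleGraph.dist_comm]

/-- Constraint matrix of the linear program whose feasible points are the plans `z ≥ 0` on `V × V`
with row sums `m_x^0` off `x` and column sums `m_y^0` off `y`. -/
def marginalMatrix [DecidableEq V] (x y : V) : V × V → V ⊕ V → ℝ
  | p, .inl u => if p.1 = u ∧ u ≠ x then 1 else 0
  | p, .inr v => if p.2 = v ∧ v ≠ y then 1 else 0

theorem sum_marginalMatrix_mul [DecidableEq V] (x y : V) (p : V × V) (w : V ⊕ V → ℝ) :
    ∑ r, marginalMatrix x y p r * w r =
      (if p.1 = x then 0 else w (.inl p.1)) + (if p.2 = y then 0 else w (.inr p.2)) := by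
  simp [Fintype.sum_sum_type, marginalMatrix, ite_and]

theorem sum_mul_marginalMatrix_inl [DecidableEq V] {x : V} (y : V) (z : V × V → ℝ) {u : V}
    (hu : u ≠ x) : ∑ p, z p * marginalMatrix x y p (.inl u) = ∑ v, z (u, v) := by
  rw [Fintype.sum_prod_type, sum_eq_single u (fun a _ ha => by simp [marginalMatrix, ha]) (by simp)]
  simp [marginalMatrix, hu]

theorem sum_mul_marginalMatrix_inr [DecidableEq V] (x : V) {y : V} (z : V × V → ℝ) {v : V}
    (hv : v ≠ y) : ∑ p, z p * marginalMatrix x y p (.inr v) = ∑ u, z (u, v) := by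
  rw [Fintype.sum_prod_type_right,
    sum_eq_single v (fun b _ hb => by simp [marginalMatrix, hb]) (by simp)]
  simp [marginalMatrix, hv]

def starCouplingOfPlan [DecidableEq V] (x y : V) (z : V × V → ℝ) : V × V → ℝ :=
  Pi.single (x, y) (∑ q, z q) - z

theorem isStarCoupling_starCouplingOfPlan [DecidableEq V] [Nontrivial V] (hconn : G.Connected)
    {x y : V} {z : V × V → ℝ} (hz : 0 ≤ z)
    (hrow : ∀ u, u ≠ x → ∑ v, z (u, v) = m0 G x u)
    (hcol : ∀ v, v ≠ y → ∑ u, z (u, v) = m0 G y v) :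
    IsStarCoupling G x y (starCouplingOfPlan x y z) := by
  refine isStarCoupling_iff.mpr ⟨?_, fun p hp => ?_, ?_, fun u hu => ?_, fun v hv => ?_⟩
  · -- `B(x, y) ≥ 1`: the rows off `x` alone carry the mass `∑ m_x^0 = 1`
    have hrows : ∑ u ∈ univ.erase x, ∑ v, z (u, v) = 1 := by
      rw [sum_congr rfl fun u hu => hrow u (ne_of_mem_erase hu), sum_erase _ (m0_self x),
        sum_m0 (deg_pos hconn x).ne']
    have hxy : z (x, y) ≤ ∑ v, z (x, v) := single_le_sum (fun v _ => hz (x, v)) (mem_univ y)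
    simp only [starCouplingOfPlan, Pi.sub_apply, Pi.single_eq_same, Fintype.sum_prod_type]
    rw [← add_sum_erase _ _ (mem_univ x), hrows]
    linarith
  · simpa [starCouplingOfPlan, hp] using hz p
  · simp [starCouplingOfPlan, sum_sub_distrib]
  · simp [starCouplingOfPlan, hu, hrow u hu]
  · simp [starCouplingOfPlan, hv, hcol v hv]

theorem sum_starCouplingOfPlan_mul [DecidableEq V] (x y : V) (z : V × V → ℝ) (c : V × V → ℝ) :
    ∑ p, starCouplingOfPlan x y z p * c p = ∑ p, z p * (c (x, y) - c p) := by
  simp [starCouplingOfPlan, sub_mul, mul_sub, sum_sub_distrib, Pi.single_apply, ite_mul, sum_mul]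

section LipEnvelope

variable [Nonempty V]

/-- The largest 1-Lipschitz function below `g`. -/
noncomputable def lipEnvelope (G : SimpleGraph V) (g : V → ℝ) (v : V) : ℝ :=
  univ.inf' univ_nonempty fun u => g u + G.dist u v

theorem lipEnvelope_le (g : V → ℝ) (u v : V) : lipEnvelope G g v ≤ g u + G.dist u v :=
  inf'_le _ (mem_univ u)

theorem le_lipEnvelope {g : V → ℝ} {v : V} {c : ℝ} (h : ∀ u, c ≤ g u + G.dist u v) :
    c ≤ lipEnvelope G g v :=
  le_inf' _ _ fun u _ => h u

theorem lip1_lipEnvelope (hconn : G.Connected) (g : V → ℝ) : Lip1 G (lipEnvelope G g) := by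
  have key : ∀ a b, lipEnvelope G g a - lipEnvelope G g b ≤ G.dist a b := fun a b => by
    obtain ⟨u, -, hu⟩ := exists_mem_eq_inf' univ_nonempty fun u => g u + (G.dist u b : ℝ)
    have := lipEnvelope_le (G := G) g u a
    have := dist_triangle_real hconn u b a
    rw [SimpleGraph.dist_comm (u := b)] at this
    have hb : lipEnvelope G g b = g u + G.dist u b := hu
    linarith
  intro a b
  rw [abs_sub_le_iff]
  exact ⟨key a b, SimpleGraph.dist_comm (G := G) ▸ key b a⟩

end LipEnvelope

theorem exists_lip1_lap_sub_le [DecidableEq V] [Nontrivial V] (hconn : G.Connected) {x y : V}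
    (w : V ⊕ V → ℝ)
    (hw : ∀ p : V × V, (G.dist x y : ℝ) - G.dist p.1 p.2 ≤
      (if p.1 = x then 0 else w (.inl p.1)) + (if p.2 = y then 0 else w (.inr p.2))) :
    ∃ f, Lip1 G f ∧ f y - f x = G.dist x y ∧
      lap G f x - lap G f y ≤ ∑ u, m0 G x u * w (.inl u) + ∑ v, m0 G y v * w (.inr v) := by
  set g : V → ℝ := fun u => if u = x then 0 else w (.inl u)
  set f := lipEnvelope G g
  have hgy : ∀ u, (G.dist x y : ℝ) - G.dist u y ≤ g u := fun u => by simpa using hw (u, y)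
  have hfx : f x = 0 := by
    refine le_antisymm (by simpa [g] using lipEnvelope_le g x x) (le_lipEnvelope fun u => ?_)
    linarith [hgy u, dist_triangle_real hconn u x y]
  have hfy : f y = G.dist x y := le_antisymm (by simpa [g] using lipEnvelope_le g x y)
    (le_lipEnvelope fun u => by linarith [hgy u])
  have hfg : ∀ u, u ≠ x → f u ≤ w (.inl u) := fun u hu => by
    simpa [g, hu] using lipEnvelope_le g u u
  have hfw : ∀ v, v ≠ y → G.dist x y - w (.inr v) ≤ f v := fun v hv =>
    le_lipEnvelope fun u => by
      have : (G.dist x y : ℝ) - G.dist u v ≤ g u + w (.inr v) := by simpa [g, hv] using hw (u, v)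
      linarith
  refine ⟨f, lip1_lipEnvelope hconn g, by rw [hfx, hfy, sub_zero], ?_⟩
  have hmx : ∑ u, m0 G x u * f u ≤ ∑ u, m0 G x u * w (.inl u) := sum_le_sum fun u _ => by
    by_cases hu : u = x
    · simp [hu]
    · exact mul_le_mul_of_nonneg_left (hfg u hu) (m0_nonneg x u)
  have hmy : ∑ v, m0 G y v * (G.dist x y - f v) ≤ ∑ v, m0 G y v * w (.inr v) :=
    sum_le_sum fun v _ => by
      by_cases hv : v = y
      · simp [hv]
      · exact mul_le_mul_of_nonneg_left (by linarith [hfw v hv]) (m0_nonneg y v)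
  have hy := sum_m0 (G := G) (deg_pos hconn y).ne'
  rw [lap_eq_sum_m0_mul_sub (deg_pos hconn x).ne', lap_eq_sum_m0_mul_sub (deg_pos hconn y).ne',
    hfx, hfy]
  simp only [mul_sub, sum_sub_distrib, ← sum_mul, hy] at hmy
  linarith

theorem exists_isStarCoupling_le_sum [Nontrivial V] (hconn : G.Connected) {x y : V} {β : ℝ}
    (hβ : ∀ f, Lip1 G f → f y - f x = G.dist x y → β ≤ lap G f x - lap G f y) :
    ∃ B, IsStarCoupling G x y B ∧ β ≤ ∑ p, B p * (G.dist p.1 p.2 : ℝ) := by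
  classical
  set c : V × V → ℝ := fun p => G.dist x y - G.dist p.1 p.2
  have hfeas : ∃ w : V ⊕ V → ℝ, ∀ p, c p ≤ ∑ r, marginalMatrix x y p r * w r := by
    refine ⟨Sum.elim (fun u => G.dist x u) (fun v => G.dist x y - G.dist x v), fun p => ?_⟩
    have h₁ : (if p.1 = x then 0 else (G.dist x p.1 : ℝ)) = G.dist x p.1 := by
      split_ifs with h <;> simp [h]
    have h₂ : (if p.2 = y then 0 else (G.dist x y - G.dist x p.2 : ℝ)) =
        G.dist x y - G.dist x p.2 := by
      split_ifs with h <;> simp [h]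
    rw [sum_marginalMatrix_mul, Sum.elim_inl, Sum.elim_inr, h₁, h₂]
    linarith [dist_triangle_real hconn x p.1 p.2]
  have hbound : ∀ w : V ⊕ V → ℝ, (∀ p, c p ≤ ∑ r, marginalMatrix x y p r * w r) →
      β ≤ ∑ r, Sum.elim (m0 G x) (m0 G y) r * w r := fun w hw => by
    obtain ⟨f, hf, hfxy, hle⟩ := exists_lip1_lap_sub_le hconn w fun p => by
      simpa only [sum_marginalMatrix_mul] using hw p
    simpa [Fintype.sum_sum_type] using (hβ f hf hfxy).trans hle
  obtain ⟨z, hz, hmarg, hval⟩ := exists_nonneg_le_sum_mul_of_forall_le_dual _ _ c β hfeas hbound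
  refine ⟨starCouplingOfPlan x y z, isStarCoupling_starCouplingOfPlan hconn hz
    (fun u hu => by simpa [sum_mul_marginalMatrix_inl y z hu] using hmarg (.inl u))
    (fun v hv => by simpa [sum_mul_marginalMatrix_inr x z hv] using hmarg (.inr v)), ?_⟩
  simpa [sum_starCouplingOfPlan_mul] using hval

theorem sSup_starCouplingValues_eq_sInf_lapDiffs (hconn : G.Connected) {x y : V} (hne : x ≠ y) :
    sSup {s : ℝ | ∃ B : V × V → ℝ, IsStarCoupling G x y B ∧
      s = ∑ᶠ p : V × V, B p * (G.dist p.1 p.2 : ℝ)} = sInf (lapDiffs G x y) := by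
  have : Nontrivial V := ⟨x, y, hne⟩
  have hT : (lapDiffs G x y).Nonempty :=
    ⟨_, fun v => (G.dist x v : ℝ), lip1_dist hconn x, by simp, rfl⟩
  have hbdd : BddBelow (lapDiffs G x y) := ⟨-2, by
    rintro _ ⟨f, hf, -, rfl⟩
    linarith [(abs_le.mp (abs_lap_le_one hf x)).1, (abs_le.mp (abs_lap_le_one hf y)).2]⟩
  obtain ⟨B, hB, hBval⟩ := exists_isStarCoupling_le_sum hconn (β := sInf (lapDiffs G x y))
    fun f hf hfxy => csInf_le hbdd ⟨f, hf, hfxy, rfl⟩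
  refine csSup_eq_of_forall_le_of_forall_lt_exists_gt ⟨_, B, hB, rfl⟩ ?_ fun w hw =>
    ⟨_, ⟨B, hB, rfl⟩, by rw [finsum_eq_sum_of_fintype]; linarith⟩
  rintro _ ⟨B', hB', rfl⟩
  refine le_csInf hT ?_
  rintro _ ⟨f, hf, hfxy, rfl⟩
  rw [finsum_eq_sum_of_fintype]
  exact hB'.sum_mul_dist_le hconn hf hfxy

end LLY

open LLY in
/-- **Bai–Huang–Lu–Yau.** For a finite connected simple graph `G` and
distinct vertices `x ≠ y`,
`κ(x,y) = (1/d(x,y)) · sup_B ∑_{u,v} B(u,v) d(u,v)`, the supremum being over all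
`*`-couplings `B` between `m_x^0` and `m_y^0`. -/
theorem curvature_via_star_coupling {V : Type*} [Fintype V] (G : SimpleGraph V)
    (hconn : G.Connected) (x y : V) (hne : x ≠ y) :
    kappa G x y =
      (1 / (G.dist x y : ℝ)) *
        sSup {s : ℝ | ∃ B : V × V → ℝ, IsStarCoupling G x y B ∧
          s = ∑ᶠ p : V × V, B p * (G.dist p.1 p.2 : ℝ)} := by
  rw [kappa_eq_inv_dist_mul_sInf_lapDiffs hconn hne,
    sSup_starCouplingValues_eq_sInf_lapDiffs hconn hne, one_div]
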